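/- Let λ be an antidominant composition, 0 ≤ r ≤ n−1, μ = π^r(λ), and let σ, σ' be appropriate fillings of dg'(μ). Fix j ≥ 0. Suppose that σ̂(π^r(u)) = σ̂'(π^r(u)) for every box u = (i,j) of d̂g(λ) lying in row j, and that the sets of values {σ(π^r(u)) : u = (i,j+1) ∈ dg'(λ)} and {σ'(π^r(u)) : u = (i,j+1) ∈ dg'(λ)} coincide. Then σ(π^r(u)) = σ'(π^r(u)) for every box u = (i,j+1) ∈ dg'(λ) in row j+1. -/

import Mathlib

open Finset

namespace CO

/-- The column diagram `dg'(λ)` of a composition, as a finset of boxes `(i, j)`,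
`1 ≤ i ≤ n`, `1 ≤ j ≤ λ_i`. -/
def dgF (n : ℕ) (lam : ℕ → ℕ) : Finset (ℕ × ℕ) :=
  (Finset.Icc 1 n).biUnion fun i => (Finset.Icc 1 (lam i)).image fun j => (i, j)

/-- The augmented diagram `d̂g(λ)`: one extra box `(i, 0)` below each column. -/
def augF (n : ℕ) (lam : ℕ → ℕ) : Finset (ℕ × ℕ) :=
  dgF n lam ∪ (Finset.Icc 1 n).image fun i => (i, 0)

/-- The box `d(u)` directly below a box. -/
def dbox (u : ℕ × ℕ) : ℕ × ℕ := (u.1, u.2 - 1)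

/-- The augmented filling `σ̂`: equal to `σ` on positive rows and to `i` on `(i, 0)`. -/
def aug (σ : ℕ × ℕ → ℕ) (u : ℕ × ℕ) : ℕ := if u.2 = 0 then u.1 else σ u

/-- A filling takes values in `{1, …, n}` on the diagram. -/
def IsFilling (n : ℕ) (lam : ℕ → ℕ) (σ : ℕ × ℕ → ℕ) : Prop :=
  ∀ u ∈ dgF n lam, 1 ≤ σ u ∧ σ u ≤ n

/-- Attacking boxes: same row, or consecutive rows with the lower box to the right. -/
def Attack (u v : ℕ × ℕ) : Prop :=
  u ≠ v ∧ (u.2 = v.2 ∨ (u.2 = v.2 + 1 ∧ u.1 < v.1) ∨ (v.2 = u.2 + 1 ∧ v.1 < u.1))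

/-- A non-attacking filling: `σ̂` takes distinct values on attacking pairs of the
augmented diagram. -/
def NonAttacking (n : ℕ) (lam : ℕ → ℕ) (σ : ℕ × ℕ → ℕ) : Prop :=
  ∀ u ∈ augF n lam, ∀ v ∈ augF n lam, Attack u v → aug σ u ≠ aug σ v

/-- The arm of a box `u`. -/
def armF (n : ℕ) (lam : ℕ → ℕ) (u : ℕ × ℕ) : Finset (ℕ × ℕ) :=
  ((dgF n lam).filter fun v => v.1 < u.1 ∧ v.2 = u.2 ∧ lam v.1 ≤ lam u.1) ∪
    ((augF n lam).filter fun v => u.1 < v.1 ∧ v.2 + 1 = u.2 ∧ lam v.1 < lam u.1)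

/-- `a(u) = |arm(u)|`. -/
def armCard (n : ℕ) (lam : ℕ → ℕ) (u : ℕ × ℕ) : ℕ := (armF n lam u).card

/-- The number of inversions of `σ̂`: attacking pairs `u, u'` with `σ̂(u) < σ̂(u')`
and (same row with `u` to the left, or `u'` one row above `u` strictly to the left). -/
def invCard (n : ℕ) (lam : ℕ → ℕ) (σ : ℕ × ℕ → ℕ) : ℕ :=
  ((augF n lam ×ˢ augF n lam).filter fun p =>
    aug σ p.1 < aug σ p.2 ∧
      ((p.1.2 = p.2.2 ∧ p.1.1 < p.2.1) ∨ (p.2.2 = p.1.2 + 1 ∧ p.2.1 < p.1.1))).card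

/-- The descent set of `σ̂`. -/
def desF (n : ℕ) (lam : ℕ → ℕ) (σ : ℕ × ℕ → ℕ) : Finset (ℕ × ℕ) :=
  (dgF n lam).filter fun u => aug σ (dbox u) < aug σ u

/-- The statistic `coinv(σ̂)` (as an integer). -/
def coinv (n : ℕ) (lam : ℕ → ℕ) (σ : ℕ × ℕ → ℕ) : ℤ :=
  (∑ u ∈ dgF n lam, (armCard n lam u : ℤ)) - invCard n lam σ +
    (((Finset.Icc 1 n ×ˢ Finset.Icc 1 n).filter fun p =>
      p.1 < p.2 ∧ lam p.1 ≤ lam p.2).card : ℤ) +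
    ∑ u ∈ desF n lam σ, (armCard n lam u : ℤ)

/-- The statistic `T(σ)`. -/
def Tstat (n : ℕ) (lam : ℕ → ℕ) (σ : ℕ × ℕ → ℕ) : ℤ :=
  coinv n lam σ -
    ∑ u ∈ (dgF n lam).filter fun u => aug σ u ≠ aug σ (dbox u), (armCard n lam u : ℤ)

/-- Antidominant composition: `λ_1 ≤ ⋯ ≤ λ_n`. -/
def Antidominant (n : ℕ) (lam : ℕ → ℕ) : Prop :=
  ∀ i j, 1 ≤ i → i ≤ j → j ≤ n → lam i ≤ lam j

/-- Appropriate filling: non-attacking with `T(σ) = 0`. -/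
def Appropriate (n : ℕ) (lam : ℕ → ℕ) (σ : ℕ × ℕ → ℕ) : Prop :=
  IsFilling n lam σ ∧ NonAttacking n lam σ ∧ Tstat n lam σ = 0

/-- The operation `π` on compositions: `π(λ) = (λ_n + 1, λ_1, …, λ_{n-1})`. -/
def piComp (n : ℕ) (lam : ℕ → ℕ) : ℕ → ℕ :=
  fun i => if i = 1 then lam n + 1 else lam (i - 1)

/-- The operation `π` on boxes. -/
def piBox (n : ℕ) (u : ℕ × ℕ) : ℕ × ℕ :=
  if u.1 < n then (u.1 + 1, u.2) else (1, u.2 + 1)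

/-- Extension by zero of a function defined on the diagram. -/
def ext (n : ℕ) (lam : ℕ → ℕ) (f : {u // u ∈ dgF n lam} → ℕ) : ℕ × ℕ → ℕ :=
  fun u => if h : u ∈ dgF n lam then f ⟨u, h⟩ else 0

/-- `qstat(σ) = Σ (l(u) + 1)` over boxes `u` with `σ̂(u) < σ̂(d(u))`. -/
def qstat (n : ℕ) (lam : ℕ → ℕ) (σ : ℕ × ℕ → ℕ) : ℕ :=
  ∑ u ∈ (dgF n lam).filter fun u => aug σ u < aug σ (dbox u), (lam u.1 - u.2 + 1)

end CO

namespace CO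

variable {n : ℕ} {lam mu : ℕ → ℕ} {σ σ' : ℕ × ℕ → ℕ}

lemma mem_dgF {u : ℕ × ℕ} :
    u ∈ dgF n lam ↔ 1 ≤ u.1 ∧ u.1 ≤ n ∧ 1 ≤ u.2 ∧ u.2 ≤ lam u.1 := by
  rcases u with ⟨i, j⟩
  simp only [dgF, Finset.mem_biUnion, Finset.mem_image, Finset.mem_Icc, Prod.mk.injEq]
  constructor
  · rintro ⟨a, ⟨h1, h2⟩, b, ⟨h3, h4⟩, rfl, rfl⟩
    exact ⟨h1, h2, h3, h4⟩
  · rintro ⟨h1, h2, h3, h4⟩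
    exact ⟨i, ⟨h1, h2⟩, j, ⟨h3, h4⟩, rfl, rfl⟩

lemma mem_augF {u : ℕ × ℕ} :
    u ∈ augF n lam ↔ 1 ≤ u.1 ∧ u.1 ≤ n ∧ (u.2 = 0 ∨ u.2 ≤ lam u.1) := by
  rcases u with ⟨i, j⟩
  simp only [augF, Finset.mem_union, mem_dgF, Finset.mem_image, Finset.mem_Icc,
    Prod.mk.injEq]
  constructor
  · rintro (⟨h1, h2, h3, h4⟩ | ⟨a, ⟨h1, h2⟩, rfl, rfl⟩) <;> omega
  · rintro ⟨h1, h2, h3 | h3⟩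
    · exact Or.inr ⟨i, ⟨h1, h2⟩, rfl, h3.symm⟩
    · rcases Nat.eq_zero_or_pos j with h | h
      · exact Or.inr ⟨i, ⟨h1, h2⟩, rfl, h.symm⟩
      · exact Or.inl ⟨h1, h2, h, h3⟩

lemma dgF_subset_augF : dgF n lam ⊆ augF n lam := Finset.subset_union_left

lemma mem_armF {u w : ℕ × ℕ} :
    w ∈ armF n lam u ↔
      (w ∈ dgF n lam ∧ w.1 < u.1 ∧ w.2 = u.2 ∧ lam w.1 ≤ lam u.1) ∨
      (w ∈ augF n lam ∧ u.1 < w.1 ∧ w.2 + 1 = u.2 ∧ lam w.1 < lam u.1) := by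
  simp only [armF, Finset.mem_union, Finset.mem_filter]

lemma mem_dgF_mk {i j : ℕ} :
    (i, j) ∈ dgF n lam ↔ 1 ≤ i ∧ i ≤ n ∧ 1 ≤ j ∧ j ≤ lam i := mem_dgF

lemma mem_augF_mk {i j : ℕ} :
    (i, j) ∈ augF n lam ↔ 1 ≤ i ∧ i ≤ n ∧ (j = 0 ∨ j ≤ lam i) := mem_augF

/-- Cyclic betweenness: `z` lies strictly between `x` and `y` going up from `x`. -/
def Btw (x y z : ℕ) : Prop :=
  (x < z ∧ z < y) ∨ (y < x ∧ x < z) ∨ (z < y ∧ y < x)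

/-- The integer indicator summand attached to a triple. -/
def gtrip (x y z : ℕ) : ℤ :=
  1 - (if z < x then 1 else 0) - (if y < z then 1 else 0)
    - (if x ≠ y then 1 else 0) + (if y < x then 1 else 0)

lemma gtrip_nonpos {x y z : ℕ} (hzx : z ≠ x) (hzy : z ≠ y) : gtrip x y z ≤ 0 := by
  unfold gtrip; split_ifs <;> omega

lemma gtrip_eq_zero {x y z : ℕ} (hzx : z ≠ x) (hzy : z ≠ y) (h : gtrip x y z = 0) :
    x = y ∨ Btw x y z := by
  unfold gtrip at h; unfold Btw
  split_ifs at h <;> omega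

lemma armF_subset_augF {u w : ℕ × ℕ} (hw : w ∈ armF n lam u) : w ∈ augF n lam := by
  rcases mem_armF.1 hw with ⟨h, -⟩ | ⟨h, -⟩
  · exact dgF_subset_augF h
  · exact h

lemma dbox_mem_augF {u : ℕ × ℕ} (hu : u ∈ dgF n lam) : dbox u ∈ augF n lam := by
  have h := mem_dgF.1 hu
  rw [mem_augF]; simp only [dbox]; omega

/-- Classification predicates for inversion pairs. -/
def pC (mu : ℕ → ℕ) (p : (ℕ × ℕ) × ℕ × ℕ) : Prop :=
  p.1.2 = 0 ∧ p.2.2 = 0 ∧ mu p.1.1 ≤ mu p.2.1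

def pZ (mu : ℕ → ℕ) (p : (ℕ × ℕ) × ℕ × ℕ) : Prop :=
  (p.1.2 = p.2.2 ∧ 1 ≤ p.1.2 ∧ mu p.1.1 ≤ mu p.2.1) ∨
    (p.2.2 = p.1.2 + 1 ∧ mu p.1.1 < mu p.2.1)

def pY (mu : ℕ → ℕ) (p : (ℕ × ℕ) × ℕ × ℕ) : Prop :=
  (p.1.2 = p.2.2 ∧ mu p.2.1 < mu p.1.1) ∨
    (p.2.2 = p.1.2 + 1 ∧ mu p.2.1 ≤ mu p.1.1)

instance (mu : ℕ → ℕ) : DecidablePred (pC mu) := fun p => by unfold pC; infer_instance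
instance (mu : ℕ → ℕ) : DecidablePred (pZ mu) := fun p => by unfold pZ; infer_instance
instance (mu : ℕ → ℕ) : DecidablePred (pY mu) := fun p => by unfold pY; infer_instance

/-- Decomposition of the inversion count into the constant part and triple indicators. -/
lemma inv_decomp (n : ℕ) (mu : ℕ → ℕ) (σ : ℕ × ℕ → ℕ) :
    invCard n mu σ =
      ((Finset.Icc 1 n ×ˢ Finset.Icc 1 n).filter fun p =>
        p.1 < p.2 ∧ mu p.1 ≤ mu p.2).card
      + ∑ u ∈ dgF n mu, ((armF n mu u).filter fun w => aug σ w < aug σ u).card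
      + ∑ u ∈ dgF n mu, ((armF n mu u).filter fun w => aug σ (dbox u) < aug σ w).card := by
  classical
  rw [invCard]
  set I := ((augF n mu ×ˢ augF n mu).filter fun p =>
    aug σ p.1 < aug σ p.2 ∧
      ((p.1.2 = p.2.2 ∧ p.1.1 < p.2.1) ∨ (p.2.2 = p.1.2 + 1 ∧ p.2.1 < p.1.1))) with hIdef
  have hmemI : ∀ p : (ℕ × ℕ) × ℕ × ℕ, p ∈ I ↔
      p.1 ∈ augF n mu ∧ p.2 ∈ augF n mu ∧ aug σ p.1 < aug σ p.2 ∧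
        ((p.1.2 = p.2.2 ∧ p.1.1 < p.2.1) ∨ (p.2.2 = p.1.2 + 1 ∧ p.2.1 < p.1.1)) := by
    intro p
    rw [hIdef, Finset.mem_filter, Finset.mem_product, and_assoc]
  have hsplit : I = (I.filter (pC mu)) ∪ ((I.filter (pZ mu)) ∪ (I.filter (pY mu))) := by
    ext p
    simp only [Finset.mem_union, Finset.mem_filter]
    constructor
    · intro hp
      have hst := ((hmemI p).1 hp).2.2.2
      have h3 : pC mu p ∨ pZ mu p ∨ pY mu p := by unfold pC pZ pY; omega
      rcases h3 with h | h | h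
      · exact Or.inl ⟨hp, h⟩
      · exact Or.inr (Or.inl ⟨hp, h⟩)
      · exact Or.inr (Or.inr ⟨hp, h⟩)
    · rintro (⟨h, -⟩ | ⟨h, -⟩ | ⟨h, -⟩) <;> exact h
  have hd2 : Disjoint (I.filter (pZ mu)) (I.filter (pY mu)) := by
    rw [Finset.disjoint_left]
    intro p h1 h2
    rw [Finset.mem_filter] at h1 h2
    have hz := h1.2; have hy := h2.2
    unfold pZ at hz; unfold pY at hy; omega
  have hd1 : Disjoint (I.filter (pC mu)) ((I.filter (pZ mu)) ∪ (I.filter (pY mu))) := by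
    rw [Finset.disjoint_left]
    intro p h1 h2
    simp only [Finset.mem_union, Finset.mem_filter] at h2
    rw [Finset.mem_filter] at h1
    have hc := h1.2
    unfold pC at hc
    rcases h2 with ⟨-, hz⟩ | ⟨-, hy⟩
    · unfold pZ at hz; omega
    · unfold pY at hy
      have hst := ((hmemI p).1 h1.1).2.2.2
      omega
  have hC : (I.filter (pC mu)).card = ((Finset.Icc 1 n ×ˢ Finset.Icc 1 n).filter fun p =>
      p.1 < p.2 ∧ mu p.1 ≤ mu p.2).card := by
    apply Finset.card_nbij' (i := fun p => (p.1.1, p.2.1))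
      (j := fun q => ((q.1, 0), (q.2, 0)))
    · intro p hp
      rw [Finset.mem_coe, Finset.mem_filter] at hp
      have h := (hmemI p).1 hp.1
      have hc := hp.2; unfold pC at hc
      have h1 := mem_augF.1 h.1
      have h2 := mem_augF.1 h.2.1
      have hst := h.2.2.2
      have hgoal : (1 ≤ p.1.1 ∧ p.1.1 ≤ n) ∧ (1 ≤ p.2.1 ∧ p.2.1 ≤ n) := by omega
      have hgoal2 : p.1.1 < p.2.1 ∧ mu p.1.1 ≤ mu p.2.1 := by omega
      exact Finset.mem_filter.2 ⟨Finset.mem_product.2 ⟨Finset.mem_Icc.2 hgoal.1,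
        Finset.mem_Icc.2 hgoal.2⟩, hgoal2⟩
    · intro q hq
      simp only [Finset.mem_coe, Finset.mem_filter, Finset.mem_product, Finset.mem_Icc] at hq
      have ha1 : ((q.1, 0) : ℕ × ℕ) ∈ augF n mu :=
        mem_augF.2 ⟨hq.1.1.1, hq.1.1.2, Or.inl rfl⟩
      have ha2 : ((q.2, 0) : ℕ × ℕ) ∈ augF n mu :=
        mem_augF.2 ⟨hq.1.2.1, hq.1.2.2, Or.inl rfl⟩
      have haug : aug σ (q.1, 0) < aug σ (q.2, 0) := by
        simp only [aug, if_pos rfl]; exact hq.2.1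
      refine Finset.mem_filter.2 ⟨(hmemI _).2 ⟨ha1, ha2, haug, Or.inl ⟨rfl, hq.2.1⟩⟩, ?_⟩
      show pC mu _
      exact ⟨rfl, rfl, hq.2.2⟩
    · intro p hp
      rw [Finset.mem_coe, Finset.mem_filter] at hp
      have hc := hp.2
      rcases p with ⟨⟨a, b⟩, c, d⟩
      obtain ⟨hb, hd, -⟩ := hc
      simp only at hb hd
      simp [hb, hd]
    · intro q hq; rfl
  have hZ : (I.filter (pZ mu)).card = ((dgF n mu).sigma fun u =>
      (armF n mu u).filter fun w => aug σ w < aug σ u).card := by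
    apply Finset.card_nbij' (i := fun p => ⟨p.2, p.1⟩)
      (j := fun q => (q.2, q.1))
    · intro p hp
      rw [Finset.mem_coe, Finset.mem_filter] at hp
      have h := (hmemI p).1 hp.1
      have hz := hp.2; unfold pZ at hz
      have h1 := mem_augF.1 h.1
      have h2 := mem_augF.1 h.2.1
      have hlt := h.2.2.1
      have hst := h.2.2.2
      have hmem2 : p.2 ∈ dgF n mu := by
        have : 1 ≤ p.2.1 ∧ p.2.1 ≤ n ∧ 1 ≤ p.2.2 ∧ p.2.2 ≤ mu p.2.1 := by omega
        exact mem_dgF.2 this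
      have hmem1 : p.1 ∈ armF n mu p.2 := by
        rcases hz with ⟨he, hb, hm⟩ | ⟨he, hm⟩
        · have hw : p.1 ∈ dgF n mu := by
            have : 1 ≤ p.1.1 ∧ p.1.1 ≤ n ∧ 1 ≤ p.1.2 ∧ p.1.2 ≤ mu p.1.1 := by omega
            exact mem_dgF.2 this
          have hii : p.1.1 < p.2.1 := by omega
          exact mem_armF.2 (Or.inl ⟨hw, hii, he, hm⟩)
        · have hii : p.2.1 < p.1.1 := by omega
          exact mem_armF.2 (Or.inr ⟨h.1, hii, he.symm, hm⟩)
      exact Finset.mem_sigma.2 ⟨hmem2, Finset.mem_filter.2 ⟨hmem1, hlt⟩⟩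
    · intro q hq
      rw [Finset.mem_coe, Finset.mem_sigma, Finset.mem_filter] at hq
      obtain ⟨hu, hw, hlt⟩ := hq
      have hud := mem_dgF.1 hu
      refine Finset.mem_filter.2 ⟨(hmemI _).2 ⟨armF_subset_augF hw, dgF_subset_augF hu,
        hlt, ?_⟩, ?_⟩
      · rcases mem_armF.1 hw with ⟨hwd, ha, hb, hc⟩ | ⟨hwd, ha, hb, hc⟩
        · exact Or.inl ⟨hb, ha⟩
        · exact Or.inr ⟨hb.symm, ha⟩
      · show pZ mu _
        rcases mem_armF.1 hw with ⟨hwd, ha, hb, hc⟩ | ⟨hwd, ha, hb, hc⟩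
        · have hwd' := mem_dgF.1 hwd
          exact Or.inl ⟨hb, hwd'.2.2.1, hc⟩
        · exact Or.inr ⟨hb.symm, hc⟩
    · intro p hp; rfl
    · intro q hq; rfl
  have hY : (I.filter (pY mu)).card = ((dgF n mu).sigma fun u =>
      (armF n mu u).filter fun w => aug σ (dbox u) < aug σ w).card := by
    apply Finset.card_nbij' (i := fun p => ⟨(p.1.1, p.1.2 + 1), p.2⟩)
      (j := fun q => ((q.1.1, q.1.2 - 1), q.2))
    · intro p hp
      rw [Finset.mem_coe, Finset.mem_filter] at hp
      have h := (hmemI p).1 hp.1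
      have hy := hp.2; unfold pY at hy
      have h1 := mem_augF.1 h.1
      have h2 := mem_augF.1 h.2.1
      have hlt := h.2.2.1
      have hst := h.2.2.2
      have hmem2 : (p.1.1, p.1.2 + 1) ∈ dgF n mu := by
        have hh : 1 ≤ p.1.1 ∧ p.1.1 ≤ n ∧ 1 ≤ p.1.2 + 1 ∧ p.1.2 + 1 ≤ mu p.1.1 := by omega
        exact mem_dgF.2 hh
      have hmem1 : p.2 ∈ armF n mu (p.1.1, p.1.2 + 1) := by
        rcases hy with ⟨he, hm⟩ | ⟨he, hm⟩
        · have hii : p.1.1 < p.2.1 := by omega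
          have hb : p.2.2 + 1 = p.1.2 + 1 := by omega
          exact mem_armF.2 (Or.inr ⟨h.2.1, hii, hb, hm⟩)
        · have hii : p.2.1 < p.1.1 := by omega
          have hw : p.2 ∈ dgF n mu := by
            have : 1 ≤ p.2.1 ∧ p.2.1 ≤ n ∧ 1 ≤ p.2.2 ∧ p.2.2 ≤ mu p.2.1 := by omega
            exact mem_dgF.2 this
          have hb : p.2.2 = p.1.2 + 1 := by omega
          exact mem_armF.2 (Or.inl ⟨hw, hii, hb, hm⟩)
      have hda : aug σ (dbox (p.1.1, p.1.2 + 1)) < aug σ p.2 := hlt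
      exact Finset.mem_sigma.2 ⟨hmem2, Finset.mem_filter.2 ⟨hmem1, hda⟩⟩
    · intro q hq
      rw [Finset.mem_coe, Finset.mem_sigma, Finset.mem_filter] at hq
      obtain ⟨hu, hw, hlt⟩ := hq
      have hud := mem_dgF.1 hu
      have ha1 : ((q.1.1, q.1.2 - 1) : ℕ × ℕ) ∈ augF n mu := by
        have : 1 ≤ q.1.1 ∧ q.1.1 ≤ n ∧ (q.1.2 - 1 = 0 ∨ q.1.2 - 1 ≤ mu q.1.1) := by omega
        exact mem_augF.2 this
      have hlt' : aug σ (q.1.1, q.1.2 - 1) < aug σ q.2 := hlt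
      refine Finset.mem_filter.2 ⟨(hmemI _).2 ⟨ha1, armF_subset_augF hw, hlt', ?_⟩, ?_⟩
      · rcases mem_armF.1 hw with ⟨hwd, ha, hb, hc⟩ | ⟨hwd, ha, hb, hc⟩
        · have hb' : q.2.2 = q.1.2 - 1 + 1 := by omega
          exact Or.inr ⟨hb', ha⟩
        · have hb' : q.1.2 - 1 = q.2.2 := by omega
          exact Or.inl ⟨hb', ha⟩
      · show pY mu _
        rcases mem_armF.1 hw with ⟨hwd, ha, hb, hc⟩ | ⟨hwd, ha, hb, hc⟩
        · have hb' : q.2.2 = q.1.2 - 1 + 1 := by omega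
          exact Or.inr ⟨hb', hc⟩
        · have hb' : q.1.2 - 1 = q.2.2 := by omega
          exact Or.inl ⟨hb', hc⟩
    · intro p hp; rfl
    · intro q hq
      rw [Finset.mem_coe, Finset.mem_sigma] at hq
      have hud := mem_dgF.1 hq.1
      rcases q with ⟨⟨a, b⟩, w⟩
      simp only at hud ⊢
      have hb : b - 1 + 1 = b := by omega
      rw [hb]
  rw [hsplit, Finset.card_union_of_disjoint hd1, Finset.card_union_of_disjoint hd2,
    hC, hZ, hY, Finset.card_sigma, Finset.card_sigma]
  ring

lemma Tstat_eq (n : ℕ) (mu : ℕ → ℕ) (σ : ℕ × ℕ → ℕ) :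
    Tstat n mu σ = ∑ u ∈ dgF n mu, ∑ w ∈ armF n mu u,
      gtrip (aug σ u) (aug σ (dbox u)) (aug σ w) := by
  classical
  have hper : ∀ u ∈ dgF n mu,
      (∑ w ∈ armF n mu u, gtrip (aug σ u) (aug σ (dbox u)) (aug σ w))
        = (armCard n mu u : ℤ)
          - (((armF n mu u).filter fun w => aug σ w < aug σ u).card : ℤ)
          - (((armF n mu u).filter fun w => aug σ (dbox u) < aug σ w).card : ℤ)
          - (if aug σ u ≠ aug σ (dbox u) then (armCard n mu u : ℤ) else 0)
          + (if aug σ (dbox u) < aug σ u then (armCard n mu u : ℤ) else 0) := by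
    intro u _
    have e1 : (∑ _w ∈ armF n mu u, (1 : ℤ)) = (armCard n mu u : ℤ) := by
      simp [armCard]
    have e2 : (∑ w ∈ armF n mu u, if aug σ w < aug σ u then (1 : ℤ) else 0)
        = (((armF n mu u).filter fun w => aug σ w < aug σ u).card : ℤ) := by
      rw [Finset.sum_boole]
    have e3 : (∑ w ∈ armF n mu u, if aug σ (dbox u) < aug σ w then (1 : ℤ) else 0)
        = (((armF n mu u).filter fun w => aug σ (dbox u) < aug σ w).card : ℤ) := by
      rw [Finset.sum_boole]
    have e4 : (∑ _w ∈ armF n mu u, if aug σ u ≠ aug σ (dbox u) then (1 : ℤ) else 0)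
        = (if aug σ u ≠ aug σ (dbox u) then (armCard n mu u : ℤ) else 0) := by
      split_ifs <;> simp [armCard]
    have e5 : (∑ _w ∈ armF n mu u, if aug σ (dbox u) < aug σ u then (1 : ℤ) else 0)
        = (if aug σ (dbox u) < aug σ u then (armCard n mu u : ℤ) else 0) := by
      split_ifs <;> simp [armCard]
    simp only [gtrip]
    rw [Finset.sum_add_distrib, Finset.sum_sub_distrib, Finset.sum_sub_distrib,
      Finset.sum_sub_distrib, e1, e2, e3, e4, e5]
  rw [Finset.sum_congr rfl hper, Tstat, coinv, inv_decomp]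
  unfold desF
  rw [Finset.sum_filter, Finset.sum_filter, Finset.sum_add_distrib,
    Finset.sum_sub_distrib, Finset.sum_sub_distrib, Finset.sum_sub_distrib]
  push_cast
  ring

lemma arm_attack {u w : ℕ × ℕ} (hu : u ∈ dgF n mu) (hw : w ∈ armF n mu u) :
    Attack u w ∧ Attack (dbox u) w := by
  have hu' := mem_dgF.1 hu
  rcases mem_armF.1 hw with ⟨hwd, h1, h2, h3⟩ | ⟨hwd, h1, h2, h3⟩
  · have hw' := mem_dgF.1 hwd
    constructor
    · exact ⟨by rintro rfl; omega, Or.inl h2.symm⟩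
    · refine ⟨by intro h; rw [Prod.ext_iff] at h; simp [dbox] at h; omega, ?_⟩
      right; right
      simp [dbox]; omega
  · have hw' := mem_augF.1 hwd
    constructor
    · refine ⟨by rintro rfl; omega, ?_⟩
      right; left; omega
    · refine ⟨by intro h; rw [Prod.ext_iff] at h; simp [dbox] at h; omega, ?_⟩
      left; simp [dbox]; omega

lemma sum_eq_zero_of_nonpos {α : Type*} {s : Finset α} {f : α → ℤ}
    (h : ∀ a ∈ s, f a ≤ 0) (h0 : ∑ a ∈ s, f a = 0) : ∀ a ∈ s, f a = 0 := by
  intro a ha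
  by_contra hne
  have hlt : f a < 0 := lt_of_le_of_ne (h a ha) hne
  have hs : ∑ b ∈ s, f b < ∑ b ∈ s, (0 : ℤ) :=
    Finset.sum_lt_sum h ⟨a, ha, hlt⟩
  rw [Finset.sum_const_zero] at hs
  omega

lemma triple_good (hσ : Appropriate n mu σ) :
    ∀ u ∈ dgF n mu, ∀ w ∈ armF n mu u,
      aug σ u = aug σ (dbox u) ∨ Btw (aug σ u) (aug σ (dbox u)) (aug σ w) := by
  obtain ⟨-, hna, hT⟩ := hσ
  rw [Tstat_eq] at hT
  have hne : ∀ u ∈ dgF n mu, ∀ w ∈ armF n mu u,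
      aug σ w ≠ aug σ u ∧ aug σ w ≠ aug σ (dbox u) := by
    intro u hu w hw
    obtain ⟨h1, h2⟩ := arm_attack hu hw
    constructor
    · exact fun h => hna u (dgF_subset_augF hu) w (armF_subset_augF hw) h1 h.symm
    · exact fun h => hna (dbox u) (dbox_mem_augF hu) w (armF_subset_augF hw) h2 h.symm
  have houter := sum_eq_zero_of_nonpos (fun u hu =>
    Finset.sum_nonpos fun w hw => gtrip_nonpos (hne u hu w hw).1 (hne u hu w hw).2) hT
  intro u hu w hw
  have hin := sum_eq_zero_of_nonpos
    (fun w hw => gtrip_nonpos (hne u hu w hw).1 (hne u hu w hw).2) (houter u hu) w hw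
  exact gtrip_eq_zero (hne u hu w hw).1 (hne u hu w hw).2 hin

lemma piComp_iter (n : ℕ) (lam : ℕ → ℕ) (hn : 1 ≤ n) :
    ∀ r, r ≤ n - 1 → ∀ i, 1 ≤ i → i ≤ n →
      ((piComp n)^[r] lam) i = if i ≤ r then lam (i + n - r) + 1 else lam (i - r) := by
  intro r
  induction r with
  | zero =>
    intro _ i h1 h2
    simp only [Function.iterate_zero_apply, if_neg (by omega : ¬ i ≤ 0)]
    congr 1
  | succ r ih =>
    intro hr i h1 h2
    rw [Function.iterate_succ_apply']
    have hfn := ih (by omega) n hn le_rfl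
    by_cases hi : i = 1
    · subst hi
      have hl : piComp n ((piComp n)^[r] lam) 1 = ((piComp n)^[r] lam) n + 1 := by
        simp [piComp]
      rw [hl, hfn, if_neg (by omega : ¬ n ≤ r), if_pos (by omega : 1 ≤ r + 1)]
      have hidx : n - r = 1 + n - (r + 1) := by omega
      rw [hidx]
    · have hl : piComp n ((piComp n)^[r] lam) i = ((piComp n)^[r] lam) (i - 1) := by
        simp [piComp, hi]
      rw [hl, ih (by omega) (i - 1) (by omega) (by omega)]
      by_cases hc : i ≤ r + 1
      · rw [if_pos (by omega : i - 1 ≤ r), if_pos hc]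
        have hidx : i - 1 + n - r = i + n - (r + 1) := by omega
        rw [hidx]
      · rw [if_neg (by omega : ¬ i - 1 ≤ r), if_neg hc]
        have hidx : i - 1 - r = i - (r + 1) := by omega
        rw [hidx]

lemma piBox_iter (n : ℕ) :
    ∀ r, r ≤ n - 1 → ∀ i j, 1 ≤ i → i ≤ n →
      (piBox n)^[r] (i, j) = if i + r ≤ n then (i + r, j) else (i + r - n, j + 1) := by
  intro r
  induction r with
  | zero =>
    intro _ i j h1 h2
    rw [Function.iterate_zero_apply, if_pos (by omega : i + 0 ≤ n)]
    rfl
  | succ r ih =>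
    intro hr i j h1 h2
    rw [Function.iterate_succ_apply', ih (by omega) i j h1 h2]
    by_cases hc : i + r ≤ n
    · rw [if_pos hc]
      simp only [piBox]
      split_ifs <;> (rw [Prod.mk.injEq]; constructor <;> omega)
    · rw [if_neg hc]
      simp only [piBox]
      split_ifs <;> (rw [Prod.mk.injEq]; constructor <;> omega)

end CO

open CO in
/-- For appropriate fillings `σ, σ'` of `dg'(π^r λ)`, the values of
`σ̂` on (the `π^r`-image of) row `j` together with the set of values taken on row
`j + 1` uniquely determine the values on row `j + 1`. -/
theorem next_row_determined (n : ℕ) (hn : 1 ≤ n) (lam : ℕ → ℕ)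
    (hanti : Antidominant n lam) (r : ℕ) (hr : r ≤ n - 1)
    (mu : ℕ → ℕ) (hmu : mu = (piComp n)^[r] lam)
    (σ σ' : ℕ × ℕ → ℕ) (hσ : Appropriate n mu σ) (hσ' : Appropriate n mu σ')
    (j : ℕ)
    (hrow : ∀ i, (i, j) ∈ augF n lam →
      aug σ ((piBox n)^[r] (i, j)) = aug σ' ((piBox n)^[r] (i, j)))
    (hset : {x | ∃ i, (i, j + 1) ∈ dgF n lam ∧ σ ((piBox n)^[r] (i, j + 1)) = x} =
      {x | ∃ i, (i, j + 1) ∈ dgF n lam ∧ σ' ((piBox n)^[r] (i, j + 1)) = x}) :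
    ∀ i, (i, j + 1) ∈ dgF n lam →
      σ ((piBox n)^[r] (i, j + 1)) = σ' ((piBox n)^[r] (i, j + 1)) := by
  classical
  have hmuval : ∀ i, 1 ≤ i → i ≤ n →
      mu i = if i ≤ r then lam (i + n - r) + 1 else lam (i - r) := by
    intro i h1 h2
    rw [hmu]
    exact piComp_iter n lam hn r hr i h1 h2
  have hbox : ∀ i j', 1 ≤ i → i ≤ n →
      (piBox n)^[r] (i, j') = if i + r ≤ n then (i + r, j') else (i + r - n, j' + 1) :=
    fun i j' h1 h2 => piBox_iter n r hr i j' h1 h2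
  have hmuR : ∀ m, 1 ≤ m → m + r ≤ n → mu (m + r) = lam m := by
    intro m h1 h2
    rw [hmuval (m + r) (by omega) h2, if_neg (by omega : ¬ m + r ≤ r)]
    have hidx : m + r - r = m := by omega
    rw [hidx]
  have hmuL : ∀ m, 1 ≤ m → m ≤ n → n < m + r → mu (m + r - n) = lam m + 1 := by
    intro m h1 h2 h3
    rw [hmuval (m + r - n) (by omega) (by omega), if_pos (by omega : m + r - n ≤ r)]
    have hidx : m + r - n + n - r = m := by omega
    rw [hidx]
  have hdgR : ∀ m, m + r ≤ n → (m, j + 1) ∈ dgF n lam →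
      ((m + r, j + 1) : ℕ × ℕ) ∈ dgF n mu := by
    intro m h2 hm
    have hm' := mem_dgF_mk.1 hm
    have hmm := hmuR m hm'.1 h2
    have hc : 1 ≤ m + r ∧ m + r ≤ n ∧ 1 ≤ j + 1 ∧ j + 1 ≤ mu (m + r) := by omega
    exact mem_dgF.2 hc
  have hdgL : ∀ m, n < m + r → (m, j + 1) ∈ dgF n lam →
      ((m + r - n, j + 2) : ℕ × ℕ) ∈ dgF n mu := by
    intro m h3 hm
    have hm' := mem_dgF_mk.1 hm
    have hmm := hmuL m hm'.1 hm'.2.1 h3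
    have hc : 1 ≤ m + r - n ∧ m + r - n ≤ n ∧ 1 ≤ j + 2 ∧ j + 2 ≤ mu (m + r - n) := by omega
    exact mem_dgF.2 hc
  have hUdg : ∀ i, (i, j + 1) ∈ dgF n lam → (piBox n)^[r] (i, j + 1) ∈ dgF n mu := by
    intro i hi
    have hi' := mem_dgF_mk.1 hi
    rw [hbox i (j + 1) hi'.1 hi'.2.1]
    by_cases hc : i + r ≤ n
    · rw [if_pos hc]; exact hdgR i hc hi
    · rw [if_neg hc]; exact hdgL i (by omega) hi
  have hdbox : ∀ i, 1 ≤ i → i ≤ n →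
      dbox ((piBox n)^[r] (i, j + 1)) = (piBox n)^[r] (i, j) := by
    intro i h1 h2
    rw [hbox i (j + 1) h1 h2, hbox i j h1 h2]
    by_cases hc : i + r ≤ n
    · rw [if_pos hc, if_pos hc]; rfl
    · rw [if_neg hc, if_neg hc]; rfl
  have haug : ∀ (τ : ℕ × ℕ → ℕ) i, 1 ≤ i → i ≤ n →
      aug τ ((piBox n)^[r] (i, j + 1)) = τ ((piBox n)^[r] (i, j + 1)) := by
    intro τ i h1 h2
    rw [hbox i (j + 1) h1 h2]
    split_ifs <;> simp [aug]
  have harm : ∀ i k, (i, j + 1) ∈ dgF n lam → (k, j + 1) ∈ dgF n lam → k < i →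
      (piBox n)^[r] (k, j + 1) ∈ armF n mu ((piBox n)^[r] (i, j + 1)) := by
    intro i k hi hk hki
    have hi' := mem_dgF_mk.1 hi
    have hk' := mem_dgF_mk.1 hk
    rw [hbox i (j + 1) hi'.1 hi'.2.1, hbox k (j + 1) hk'.1 hk'.2.1]
    have hlam : lam k ≤ lam i := hanti k i hk'.1 (le_of_lt hki) hi'.2.1
    by_cases hci : i + r ≤ n
    · have hck : k + r ≤ n := by omega
      rw [if_pos hci, if_pos hck]
      have hmule : mu (k + r) ≤ mu (i + r) := by
        rw [hmuR k hk'.1 hck, hmuR i hi'.1 hci]; exact hlam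
      exact mem_armF.2 (Or.inl ⟨hdgR k hck hk, (by omega : k + r < i + r), rfl, hmule⟩)
    · rw [if_neg hci]
      by_cases hck : k + r ≤ n
      · rw [if_pos hck]
        have hmult : mu (k + r) < mu (i + r - n) := by
          rw [hmuR k hk'.1 hck, hmuL i hi'.1 hi'.2.1 (by omega)]; omega
        exact mem_armF.2 (Or.inr ⟨dgF_subset_augF (hdgR k hck hk),
          (by omega : i + r - n < k + r), rfl, hmult⟩)
      · rw [if_neg hck]
        have hmule : mu (k + r - n) ≤ mu (i + r - n) := by
          rw [hmuL k hk'.1 hk'.2.1 (by omega), hmuL i hi'.1 hi'.2.1 (by omega)]; omega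
        exact mem_armF.2 (Or.inl ⟨hdgL k (by omega) hk,
          (by omega : k + r - n < i + r - n), rfl, hmule⟩)
  have hinj : ∀ (τ : ℕ × ℕ → ℕ), NonAttacking n mu τ → ∀ i k,
      (i, j + 1) ∈ dgF n lam → (k, j + 1) ∈ dgF n lam → i ≠ k →
      τ ((piBox n)^[r] (i, j + 1)) ≠ τ ((piBox n)^[r] (k, j + 1)) := by
    intro τ hna i k hi hk hik
    have hi' := mem_dgF_mk.1 hi
    have hk' := mem_dgF_mk.1 hk
    have hatt : Attack ((piBox n)^[r] (i, j + 1)) ((piBox n)^[r] (k, j + 1)) := by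
      rw [hbox i (j + 1) hi'.1 hi'.2.1, hbox k (j + 1) hk'.1 hk'.2.1]
      by_cases hci : i + r ≤ n <;> by_cases hck : k + r ≤ n
      · rw [if_pos hci, if_pos hck]
        refine ⟨?_, Or.inl rfl⟩
        rw [Ne, Prod.mk.injEq]
        omega
      · rw [if_pos hci, if_neg hck]
        refine ⟨?_, Or.inr (Or.inr ⟨rfl, (by omega : k + r - n < i + r)⟩)⟩
        rw [Ne, Prod.mk.injEq]
        omega
      · rw [if_neg hci, if_pos hck]
        refine ⟨?_, Or.inr (Or.inl ⟨rfl, (by omega : i + r - n < k + r)⟩)⟩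
        rw [Ne, Prod.mk.injEq]
        omega
      · rw [if_neg hci, if_neg hck]
        refine ⟨?_, Or.inl rfl⟩
        rw [Ne, Prod.mk.injEq]
        omega
    intro heq
    have haugeq : aug τ ((piBox n)^[r] (i, j + 1)) = aug τ ((piBox n)^[r] (k, j + 1)) := by
      rw [haug τ i hi'.1 hi'.2.1, haug τ k hk'.1 hk'.2.1]; exact heq
    exact hna _ (dgF_subset_augF (hUdg i hi)) _ (dgF_subset_augF (hUdg k hk)) hatt haugeq
  have hyeq : ∀ i, (i, j + 1) ∈ dgF n lam →
      aug σ ((piBox n)^[r] (i, j)) = aug σ' ((piBox n)^[r] (i, j)) := by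
    intro i hi
    have h := mem_dgF_mk.1 hi
    exact hrow i (mem_augF_mk.2 ⟨h.1, h.2.1, by omega⟩)
  have key : ∀ (τ : ℕ × ℕ → ℕ), Appropriate n mu τ → ∀ i k,
      (i, j + 1) ∈ dgF n lam → (k, j + 1) ∈ dgF n lam → k < i →
      τ ((piBox n)^[r] (i, j + 1)) = aug τ ((piBox n)^[r] (i, j)) ∨
        CO.Btw (τ ((piBox n)^[r] (i, j + 1))) (aug τ ((piBox n)^[r] (i, j)))
          (τ ((piBox n)^[r] (k, j + 1))) := by
    intro τ hτ i k hi hk hki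
    have hi' := mem_dgF_mk.1 hi
    have hk' := mem_dgF_mk.1 hk
    have h := triple_good hτ _ (hUdg i hi) _ (harm i k hi hk hki)
    rw [hdbox i hi'.1 hi'.2.1, haug τ i hi'.1 hi'.2.1, haug τ k hk'.1 hk'.2.1] at h
    exact h
  have hsetiff := Set.ext_iff.1 hset
  have step : ∀ i, (i, j + 1) ∈ dgF n lam →
      (∀ k, (k, j + 1) ∈ dgF n lam → i < k →
        σ ((piBox n)^[r] (k, j + 1)) = σ' ((piBox n)^[r] (k, j + 1))) →
      σ ((piBox n)^[r] (i, j + 1)) = σ' ((piBox n)^[r] (i, j + 1)) := by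
    intro i hi IH
    by_contra hne
    obtain ⟨k, hk, hkx⟩ : ∃ k, (k, j + 1) ∈ dgF n lam ∧
        σ ((piBox n)^[r] (k, j + 1)) = σ' ((piBox n)^[r] (i, j + 1)) :=
      (hsetiff _).2 ⟨i, hi, rfl⟩
    obtain ⟨k', hk', hk'x⟩ : ∃ k', (k', j + 1) ∈ dgF n lam ∧
        σ' ((piBox n)^[r] (k', j + 1)) = σ ((piBox n)^[r] (i, j + 1)) :=
      (hsetiff _).1 ⟨i, hi, rfl⟩
    have hki : k ≠ i := by
      rintro rfl
      exact hne hkx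
    have hk'i : k' ≠ i := by
      rintro rfl
      exact hne hk'x.symm
    have hklt : k < i := by
      rcases Nat.lt_or_ge k i with h | h
      · exact h
      · exfalso
        have h1 := IH k hk (by omega)
        have h2 : σ' ((piBox n)^[r] (k, j + 1)) = σ' ((piBox n)^[r] (i, j + 1)) := by
          rw [← h1]; exact hkx
        exact hinj σ' hσ'.2.1 k i hk hi hki h2
    have hk'lt : k' < i := by
      rcases Nat.lt_or_ge k' i with h | h
      · exact h
      · exfalso
        have h1 := IH k' hk' (by omega)
        have h2 : σ ((piBox n)^[r] (k', j + 1)) = σ ((piBox n)^[r] (i, j + 1)) := by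
          rw [h1]; exact hk'x
        exact hinj σ hσ.2.1 k' i hk' hi hk'i h2
    have c1 := key σ hσ i k hi hk hklt
    have c2 := key σ' hσ' i k' hi hk' hk'lt
    rw [hkx] at c1
    rw [hk'x] at c2
    rw [hyeq i hi] at c1
    unfold CO.Btw at c1 c2
    omega
  have main : ∀ d i, (i, j + 1) ∈ dgF n lam → n ≤ i + d →
      σ ((piBox n)^[r] (i, j + 1)) = σ' ((piBox n)^[r] (i, j + 1)) := by
    intro d
    induction d with
    | zero =>
      intro i hi hd
      refine step i hi fun k hk hik => ?_
      exact absurd (mem_dgF_mk.1 hk).2.1 (by omega)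
    | succ d ih =>
      intro i hi hd
      refine step i hi fun k hk hik => ih k hk (by omega)
  intro i hi
  exact main n i hi (by omega)
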